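/- arXiv:math/0311486 — 6 statements merged into one kernel-verified Lean document; each statement's English description precedes it below -/
import Mathlib

section
/- Let E be a finite-dimensional real inner product space and let f : E → ℝ be a convex Lipschitz function. Then: (a) for every unit vector v ∈ E one has slope_f(v) + slope_f(−v) ≥ 0; in particular slope_f(v) and slope_f(−v) cannot both be negative. (b) If there exists a unit vector v with slope_f(v) < 0, then there is a unique unit vector ξ ∈ E at which slope_f attains its minimum over the unit sphere of E. -/
open Filter Metric Set

/-!
The asymptotic slope `s` inherits convexity from `f` and is positively homogeneous, hence
subadditive with `s 0 = 0`; this gives `0 = s (v + -v) ≤ s v + s (-v)`. Being convex on a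
finite-dimensional space, `s` is continuous and attains its minimum `m` on the unit sphere. If
`m < 0` were attained at two distinct unit vectors `ξ, η`, then `s (ξ + η) ≤ 2m`, while strict
convexity of the Euclidean norm gives `0 < ‖ξ + η‖ < 2`; the unit vector `(ξ + η) / ‖ξ + η‖`
would then have slope at most `2m / ‖ξ + η‖ < m`.
-/

section Sublinear

variable {E : Type*} [AddCommGroup E] [Module ℝ E] {s : E → ℝ}

theorem map_zero_of_pos_homogeneous (hhom : ∀ c : ℝ, 0 < c → ∀ v, s (c • v) = c * s v) :
    s 0 = 0 := by
  have h := hhom 2 two_pos 0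
  rw [smul_zero] at h
  linarith

theorem ConvexOn.map_add_le_of_pos_homogeneous (hconv : ConvexOn ℝ univ s)
    (hhom : ∀ c : ℝ, 0 < c → ∀ v, s (c • v) = c * s v) (x y : E) :
    s (x + y) ≤ s x + s y := by
  have hmid := hconv.2 (mem_univ x) (mem_univ y) (by norm_num : (0 : ℝ) ≤ 1 / 2)
    (by norm_num : (0 : ℝ) ≤ 1 / 2) (by norm_num)
  have hxy : x + y = (2 : ℝ) • ((1 / 2 : ℝ) • x + (1 / 2 : ℝ) • y) := by module
  rw [hxy, hhom 2 two_pos]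
  simp only [smul_eq_mul] at hmid
  linarith

end Sublinear

section UnitSphere

variable {E : Type*} [NormedAddCommGroup E] [NormedSpace ℝ E] {s : E → ℝ}

theorem ConvexOn.eq_of_isMinOn_sphere_of_neg [StrictConvexSpace ℝ E]
    (hconv : ConvexOn ℝ univ s) (hhom : ∀ c : ℝ, 0 < c → ∀ v, s (c • v) = c * s v)
    {ξ η : E} (hξ : ξ ∈ sphere (0 : E) 1) (hη : η ∈ sphere (0 : E) 1)
    (hξmin : IsMinOn s (sphere 0 1) ξ) (hηmin : IsMinOn s (sphere 0 1) η) (hneg : s ξ < 0) :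
    η = ξ := by
  rw [mem_sphere_zero_iff_norm] at hξ hη
  by_contra hne
  have hsum : s (ξ + η) ≤ 2 * s ξ := by
    have hηξ : s η ≤ s ξ := hηmin (mem_sphere_zero_iff_norm.2 hξ)
    linarith [hconv.map_add_le_of_pos_homogeneous hhom ξ η]
  have hsum_ne : ξ + η ≠ 0 := by
    intro h
    rw [h, map_zero_of_pos_homogeneous hhom] at hsum
    linarith
  have hsum_pos : 0 < ‖ξ + η‖ := norm_pos_iff.2 hsum_ne
  have hsum_lt : ‖ξ + η‖ < 2 := by
    have := norm_add_lt_of_not_sameRay ((not_sameRay_iff_of_norm_eq (hξ.trans hη.symm)).2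
      (Ne.symm hne))
    rwa [hξ, hη, one_add_one_eq_two] at this
  have hu : ‖ξ + η‖⁻¹ • (ξ + η) ∈ sphere (0 : E) 1 := by
    rw [mem_sphere_zero_iff_norm, norm_smul, norm_inv, norm_norm, inv_mul_cancel₀ hsum_pos.ne']
  have hlt : s (‖ξ + η‖⁻¹ • (ξ + η)) < s ξ := by
    rw [hhom _ (inv_pos.2 hsum_pos), inv_mul_lt_iff₀ hsum_pos]
    nlinarith
  exact (hξmin hu).not_gt hlt

theorem ConvexOn.existsUnique_isMinOn_sphere [FiniteDimensional ℝ E] [StrictConvexSpace ℝ E]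
    (hconv : ConvexOn ℝ univ s) (hhom : ∀ c : ℝ, 0 < c → ∀ v, s (c • v) = c * s v)
    (hneg : ∃ v ∈ sphere (0 : E) 1, s v < 0) :
    ∃! ξ, ξ ∈ sphere (0 : E) 1 ∧ IsMinOn s (sphere 0 1) ξ := by
  obtain ⟨v, hv, hsv⟩ := hneg
  obtain ⟨ξ, hξ, hξmin⟩ := (isCompact_sphere (0 : E) 1).exists_isMinOn ⟨v, hv⟩
    hconv.locallyLipschitz.continuous.continuousOn
  exact ⟨ξ, ⟨hξ, hξmin⟩, fun η ⟨hη, hηmin⟩ =>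
    hconv.eq_of_isMinOn_sphere_of_neg hhom hξ hη hξmin hηmin ((hξmin hv).trans_lt hsv)⟩

end UnitSphere

def HasAsymptoticSlope {E : Type*} [AddCommGroup E] [Module ℝ E] (f s : E → ℝ) : Prop :=
  ∀ v : E, Tendsto (fun t : ℝ => f (t • v) / t) atTop (nhds (s v))

namespace HasAsymptoticSlope

variable {E : Type*} [AddCommGroup E] [Module ℝ E] {f s : E → ℝ}

theorem map_smul (hs : HasAsymptoticSlope f s) {c : ℝ} (hc : 0 < c) (v : E) :
    s (c • v) = c * s v := by
  have hscaled : Tendsto (fun t : ℝ => c * (f ((t * c) • v) / (t * c))) atTop (nhds (c * s v)) :=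
    ((hs v).comp (tendsto_id.atTop_mul_const hc)).const_mul c
  refine tendsto_nhds_unique (hs (c • v)) (hscaled.congr' ?_)
  filter_upwards [eventually_gt_atTop 0] with t ht
  rw [smul_smul]
  field_simp

theorem convexOn (hs : HasAsymptoticSlope f s) (hf : ConvexOn ℝ univ f) :
    ConvexOn ℝ univ s := by
  refine ⟨convex_univ, fun x _ y _ a b ha hb hab => ?_⟩
  refine le_of_tendsto_of_tendsto (hs _) (((hs x).const_mul a).add ((hs y).const_mul b)) ?_
  filter_upwards [eventually_gt_atTop 0] with t ht
  have hcomb : t • (a • x + b • y) = a • (t • x) + b • (t • y) := by module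
  have hf_comb := hf.2 (mem_univ (t • x)) (mem_univ (t • y)) ha hb hab
  simp only [smul_eq_mul] at hf_comb
  rw [hcomb, ← mul_div_assoc, ← mul_div_assoc, ← add_div]
  exact div_le_div_of_nonneg_right hf_comb ht.le

end HasAsymptoticSlope

theorem asymptotic_slope_opposite_and_unique_min_general
    {E : Type*} [NormedAddCommGroup E] [InnerProductSpace ℝ E]
    [FiniteDimensional ℝ E]
    (f : E → ℝ) (hconv : ConvexOn ℝ Set.univ f)
    (s : E → ℝ)
    (hs : ∀ v : E, Tendsto (fun t : ℝ => f (t • v) / t) atTop (nhds (s v))) :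
    (∀ v : E, ‖v‖ = 1 → 0 ≤ s v + s (-v)) ∧
    ((∃ v : E, ‖v‖ = 1 ∧ s v < 0) →
      ∃! ξ : E, ‖ξ‖ = 1 ∧ ∀ η : E, ‖η‖ = 1 → s ξ ≤ s η) := by
  have hs : HasAsymptoticSlope f s := hs
  have hhom : ∀ c : ℝ, 0 < c → ∀ v, s (c • v) = c * s v := fun _ hc => hs.map_smul hc
  have hconv_s := hs.convexOn hconv
  refine ⟨fun v _ => ?_, fun ⟨v, hv, hsv⟩ => ?_⟩
  · simpa [map_zero_of_pos_homogeneous hhom] using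
      hconv_s.map_add_le_of_pos_homogeneous hhom v (-v)
  · simpa only [mem_sphere_zero_iff_norm, isMinOn_iff] using
      hconv_s.existsUnique_isMinOn_sphere hhom ⟨v, mem_sphere_zero_iff_norm.2 hv, hsv⟩

/-- (a) For a convex Lipschitz function `f` on a finite-dimensional real inner
product space, the asymptotic slopes in opposite unit directions satisfy
`slope_f(v) + slope_f(-v) ≥ 0`; (b) if there is a unit direction of negative
asymptotic slope, then the slope function has a unique minimum on the unit
sphere. -/
theorem asymptotic_slope_opposite_and_unique_min
    {E : Type*} [NormedAddCommGroup E] [InnerProductSpace ℝ E]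
    [FiniteDimensional ℝ E]
    (f : E → ℝ) (hconv : ConvexOn ℝ Set.univ f)
    (C : NNReal) (hlip : LipschitzWith C f)
    (s : E → ℝ)
    (hs : ∀ v : E, Tendsto (fun t : ℝ => f (t • v) / t) atTop (nhds (s v))) :
    (∀ v : E, ‖v‖ = 1 → 0 ≤ s v + s (-v)) ∧
    ((∃ v : E, ‖v‖ = 1 ∧ s v < 0) →
      ∃! ξ : E, ‖ξ‖ = 1 ∧ ∀ η : E, ‖η‖ = 1 → s ξ ≤ s η) :=
  asymptotic_slope_opposite_and_unique_min_general f hconv s hs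
end

section
/- Let E be a finite-dimensional real inner product space and let f : E → ℝ be a convex Lipschitz function. Then the following are equivalent: (i) slope_f(v) > 0 for every unit vector v ∈ E; (ii) every sublevel set {x ∈ E : f(x) ≤ a}, a ∈ ℝ, is bounded (equivalently compact). In particular, if slope_f > 0 on all unit vectors then f is proper and bounded below and attains its infimum. -/
/-!
Along each ray the secant slopes `(f (t • v) - f 0) / t` of the convex function `f` increase
with `t` towards `s v`. If `s > 0` on the unit sphere, compactness of the sphere yields one `T`
and `δ > 0` with slope at least `δ` at time `T` in every unit direction, hence
`f x ≥ f 0 + δ ‖x‖` once `‖x‖ ≥ T`, and the sublevel sets are bounded. Conversely, if `s v ≤ 0`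
then the whole ray `t • v`, `t > 0`, lies in `{x | f x ≤ f 0}`. Being convex on a
finite-dimensional space, `f` is continuous, so bounded sublevel sets are compact and `f`
attains its minimum on `{x | f x ≤ f 0}`.
-/

open Filter Set Bornology Topology

section OneVariable

variable {φ : ℝ → ℝ} {L : ℝ}

theorem tendsto_slope_zero_atTop (h : Tendsto (fun t => φ t / t) atTop (𝓝 L)) :
    Tendsto (slope φ 0) atTop (𝓝 L) := by
  have h' : Tendsto (fun t => φ t / t - φ 0 / t) atTop (𝓝 (L - 0)) :=
    h.sub (tendsto_const_nhds.div_atTop tendsto_id)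
  rw [sub_zero] at h'
  refine h'.congr fun t => ?_
  rw [slope_def_field, sub_zero, sub_div]

theorem ConvexOn.monotoneOn_slope_zero (hφ : ConvexOn ℝ univ φ) :
    MonotoneOn (slope φ 0) (Ioi 0) :=
  (hφ.monotoneOn_slope_gt (mem_univ 0)).mono fun t ht => ⟨mem_univ t, ht⟩

theorem ConvexOn.slope_zero_le (hφ : ConvexOn ℝ univ φ)
    (h : Tendsto (fun t => φ t / t) atTop (𝓝 L)) {t : ℝ} (ht : 0 < t) : slope φ 0 t ≤ L :=
  ge_of_tendsto (tendsto_slope_zero_atTop h) <| eventually_atTop.2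
    ⟨t, fun _ ht' => hφ.monotoneOn_slope_zero ht (ht.trans_le ht') ht'⟩

end OneVariable

/-- Dini-type argument: the open sets `{x | 0 < g t x}` increase with `t` and cover `K`. -/
theorem IsCompact.exists_forall_le_of_eventually_pos {X : Type*} [TopologicalSpace X]
    {K : Set X} (hK : IsCompact K) {g : ℝ → X → ℝ} (hg : ∀ t, Continuous (g t))
    (hmono : ∀ x, MonotoneOn (g · x) (Ioi 0)) (hpos : ∀ x ∈ K, ∀ᶠ t in atTop, 0 < g t x) :
    ∃ T > 0, ∃ δ > 0, ∀ x ∈ K, δ ≤ g T x := by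
  set U : ℝ → Set X := fun t => {x | 0 < g (max t 1) x}
  have hU : Monotone U := fun t t' htt' x hx =>
    hx.trans_le <| hmono x (one_pos.trans_le (le_max_right t 1))
      (one_pos.trans_le (le_max_right t' 1)) (max_le_max htt' le_rfl)
  have hKU : K ⊆ ⋃ t, U t := fun x hx => mem_iUnion.2 <|
    ((hpos x hx).and (eventually_ge_atTop 1)).exists.imp fun t ⟨hgt, ht⟩ => by
      simpa [U, max_eq_left ht] using hgt
  obtain ⟨t, ht⟩ := hK.elim_directed_cover U (fun t => isOpen_lt continuous_const (hg _)) hKU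
    hU.directed_le
  obtain ⟨δ, hδ, hδK⟩ := hK.exists_forall_le' (hg _).continuousOn fun x hx => ht hx
  exact ⟨max t 1, one_pos.trans_le (le_max_right _ _), δ, hδ, hδK⟩

section NormedSpace

variable {E : Type*} [NormedAddCommGroup E] {f : E → ℝ}

theorem isBounded_sublevel_of_add_mul_norm_le {c δ T : ℝ} (hδ : 0 < δ)
    (h : ∀ x : E, T ≤ ‖x‖ → c + δ * ‖x‖ ≤ f x) (a : ℝ) : IsBounded {x | f x ≤ a} := by
  refine isBounded_iff_forall_norm_le.2 ⟨max T ((a - c) / δ), fun x hx => ?_⟩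
  by_contra! hlt
  have hax : a - c < δ * ‖x‖ := (div_lt_iff₀' hδ).1 ((le_max_right _ _).trans_lt hlt)
  linarith [h x ((le_max_left _ _).trans hlt.le), show f x ≤ a from hx]

variable [NormedSpace ℝ E]

theorem ConvexOn.comp_smul_right (hf : ConvexOn ℝ univ f) (v : E) :
    ConvexOn ℝ univ fun t : ℝ => f (t • v) :=
  hf.comp_linearMap (LinearMap.toSpanSingleton ℝ E v)

theorem ConvexOn.add_mul_norm_le (hf : ConvexOn ℝ univ f) {T δ : ℝ} (hT : 0 < T)
    (hδ : ∀ v : E, ‖v‖ = 1 → δ ≤ slope (fun r : ℝ => f (r • v)) 0 T) {x : E}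
    (hx : T ≤ ‖x‖) : f 0 + δ * ‖x‖ ≤ f x := by
  have hx0 : 0 < ‖x‖ := hT.trans_le hx
  set v : E := ‖x‖⁻¹ • x
  have hv : ‖v‖ = 1 := norm_smul_inv_norm (norm_pos_iff.1 hx0)
  have hxv : ‖x‖ • v = x := smul_inv_smul₀ hx0.ne' x
  have h := (hδ v hv).trans ((hf.comp_smul_right v).monotoneOn_slope_zero hT hx0 hx)
  rw [slope_def_field, hxv, zero_smul, sub_zero, le_div_iff₀ hx0] at h
  linarith

theorem ConvexOn.isBounded_sublevel [FiniteDimensional ℝ E] {s : E → ℝ} (hf : ConvexOn ℝ univ f)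
    (hs : ∀ v, Tendsto (fun t : ℝ => f (t • v) / t) atTop (𝓝 (s v)))
    (hpos : ∀ v : E, ‖v‖ = 1 → 0 < s v) (a : ℝ) : IsBounded {x | f x ≤ a} := by
  have hcont : Continuous f := hf.locallyLipschitz.continuous
  obtain ⟨T, hT, δ, hδ, hslope⟩ := (isCompact_sphere (0 : E) 1).exists_forall_le_of_eventually_pos
    (g := fun t v => slope (fun r : ℝ => f (r • v)) 0 t)
    (fun t => by simp only [slope]; fun_prop)
    (fun v => (hf.comp_smul_right v).monotoneOn_slope_zero)
    fun v hv => (tendsto_slope_zero_atTop (hs v)).eventually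
      (eventually_gt_nhds (hpos v (mem_sphere_zero_iff_norm.1 hv)))
  exact isBounded_sublevel_of_add_mul_norm_le hδ
    (fun x hx => hf.add_mul_norm_le hT (fun v hv => hslope v (mem_sphere_zero_iff_norm.2 hv)) hx) a

theorem ConvexOn.pos_of_isBounded_sublevel (hf : ConvexOn ℝ univ f) {v : E} {L : ℝ}
    (hs : Tendsto (fun t : ℝ => f (t • v) / t) atTop (𝓝 L)) (hv : v ≠ 0)
    (hb : IsBounded {x | f x ≤ f 0}) : 0 < L := by
  by_contra! hL
  obtain ⟨R, hR⟩ := isBounded_iff_forall_norm_le.1 hb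
  set t := (|R| + 1) / ‖v‖
  have ht : 0 < t := by positivity
  have hray : f (t • v) ≤ f 0 := by
    have h := ((hf.comp_smul_right v).slope_zero_le hs ht).trans hL
    rw [slope_def_field, zero_smul, sub_zero, div_nonpos_iff] at h
    rcases h with ⟨-, h⟩ | ⟨h, -⟩ <;> linarith
  have htv : ‖t • v‖ = |R| + 1 := by
    rw [norm_smul, Real.norm_of_nonneg ht.le, div_mul_cancel₀ _ (norm_ne_zero_iff.2 hv)]
  linarith [hR _ hray, le_abs_self R]

end NormedSpace

theorem asymptotic_slope_positive_iff_proper_general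
    {E : Type*} [NormedAddCommGroup E] [InnerProductSpace ℝ E]
    [FiniteDimensional ℝ E]
    (f : E → ℝ) (hconv : ConvexOn ℝ Set.univ f)
    (s : E → ℝ)
    (hs : ∀ v : E, Tendsto (fun t : ℝ => f (t • v) / t) atTop (nhds (s v))) :
    ((∀ v : E, ‖v‖ = 1 → 0 < s v) ↔
        ∀ a : ℝ, Bornology.IsBounded {x : E | f x ≤ a}) ∧
    ((∀ v : E, ‖v‖ = 1 → 0 < s v) ↔
        ∀ a : ℝ, IsCompact {x : E | f x ≤ a}) ∧
    ((∀ v : E, ‖v‖ = 1 → 0 < s v) → ∃ x : E, ∀ z : E, f x ≤ f z) := by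
  have hcont : Continuous f := hconv.locallyLipschitz.continuous
  have hbounded : (∀ v : E, ‖v‖ = 1 → 0 < s v) ↔ ∀ a : ℝ, IsBounded {x : E | f x ≤ a} :=
    ⟨hconv.isBounded_sublevel hs, fun hb v hv =>
      hconv.pos_of_isBounded_sublevel (hs v) (norm_ne_zero_iff.1 (hv ▸ one_ne_zero)) (hb (f 0))⟩
  have hcompact : (∀ a : ℝ, IsBounded {x : E | f x ≤ a}) ↔ ∀ a : ℝ, IsCompact {x : E | f x ≤ a} :=
    forall_congr' fun a => by
      rw [Metric.isCompact_iff_isClosed_bounded, and_iff_right (isClosed_le hcont continuous_const)]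
  refine ⟨hbounded, hbounded.trans hcompact, fun hpos => ?_⟩
  have hK := hcompact.1 (hbounded.1 hpos) (f 0)
  exact hcont.exists_forall_le' 0 <|
    mem_of_superset hK.compl_mem_cocompact fun x (hx : ¬f x ≤ f 0) => le_of_not_ge hx

/-- For a convex Lipschitz function `f` on a finite-dimensional real inner
product space: the asymptotic slope is positive in all unit directions iff all
sublevel sets are bounded (equivalently compact); in that case `f` is bounded
below and attains its infimum. -/
theorem asymptotic_slope_positive_iff_proper
    {E : Type*} [NormedAddCommGroup E] [InnerProductSpace ℝ E]
    [FiniteDimensional ℝ E]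
    (f : E → ℝ) (hconv : ConvexOn ℝ Set.univ f)
    (C : NNReal) (hlip : LipschitzWith C f)
    (s : E → ℝ)
    (hs : ∀ v : E, Tendsto (fun t : ℝ => f (t • v) / t) atTop (nhds (s v))) :
    ((∀ v : E, ‖v‖ = 1 → 0 < s v) ↔
        ∀ a : ℝ, Bornology.IsBounded {x : E | f x ≤ a}) ∧
    ((∀ v : E, ‖v‖ = 1 → 0 < s v) ↔
        ∀ a : ℝ, IsCompact {x : E | f x ≤ a}) ∧
    ((∀ v : E, ‖v‖ = 1 → 0 < s v) → ∃ x : E, ∀ z : E, f x ≤ f z) :=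
  asymptotic_slope_positive_iff_proper_general f hconv s hs
end

section
/- Let E be a finite-dimensional real inner product space and let f : E → ℝ be a convex, continuously differentiable Lipschitz function such that slope_f(v) ≥ 0 for every unit vector v ∈ E. Then f has almost critical points: for every ε > 0 there exists a point p ∈ E with ‖∇f(p)‖ < ε, i.e. inf_{p ∈ E} ‖∇f(p)‖ = 0. -/
/-!
If `‖∇f‖ ≥ ε` everywhere, a minimiser of `f + (ε/2)‖·‖` on the closed ball of radius `R` cannot
be interior, since there the gradient would have norm at most `ε/2`. So it lies on the sphere,
where `f` is at most `f 0 - εR/2`. Convexity carries such a drop inwards along the ray through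
the minimiser, and compactness of the unit sphere yields one direction `v` with
`f (t • v) ≤ f 0 - εt/2` for all `t ≥ 0`, forcing `slope_f(v) ≤ -ε/2 < 0`.
-/

open Filter Set Topology

section

variable {F : Type*} [NormedAddCommGroup F] [NormedSpace ℝ F]

theorem HasFDerivAt.neg_mul_norm_le_apply {f : F → ℝ} {f' : F →L[ℝ] ℝ} {p : F} {K : ℝ}
    (hf : HasFDerivAt f f' p) (hmin : ∀ᶠ y in 𝓝 p, f p - K * ‖y - p‖ ≤ f y) (u : F) :
    -(K * ‖u‖) ≤ f' u := by
  set φ : ℝ → ℝ := fun t => f (p + t • u) + t * (K * ‖u‖)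
  have hline : HasDerivAt (fun t : ℝ => p + t • u) u 0 := by
    simpa using ((hasDerivAt_id (0 : ℝ)).smul_const u).const_add p
  have hφ : HasDerivAt φ (f' u + K * ‖u‖) 0 := by
    have hf' : HasFDerivAt f f' (p + (0 : ℝ) • u) := by simpa using hf
    exact (hf'.comp_hasDerivAt 0 hline).add (hasDerivAt_mul_const _)
  have hφmin : IsLocalMinOn φ (Ici 0) 0 := by
    have hcont : Tendsto (fun t : ℝ => p + t • u) (𝓝 0) (𝓝 p) := by
      simpa using hline.continuousAt.tendsto
    filter_upwards [nhdsWithin_le_nhds (hcont.eventually hmin), self_mem_nhdsWithin]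
      with t ht (ht0 : 0 ≤ t)
    simp only [φ, zero_smul, add_zero, add_sub_cancel_left, norm_smul,
      Real.norm_of_nonneg ht0] at ht ⊢
    linarith
  have hone : (1 : ℝ) ∈ posTangentConeAt (Ici 0) (0 : ℝ) :=
    mem_posTangentConeAt_of_segment_subset (by simp [segment_eq_Icc, Icc_subset_Ici_self])
  have := hφmin.hasFDerivWithinAt_nonneg hφ.hasFDerivAt.hasFDerivWithinAt hone
  simp only [ContinuousLinearMap.toSpanSingleton_apply, smul_eq_mul, one_mul] at this
  linarith

theorem HasFDerivAt.norm_le_of_eventually_sub_mul_norm_le {f : F → ℝ} {f' : F →L[ℝ] ℝ} {p : F}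
    {K : ℝ} (hf : HasFDerivAt f f' p) (hK : 0 ≤ K)
    (hmin : ∀ᶠ y in 𝓝 p, f p - K * ‖y - p‖ ≤ f y) : ‖f'‖ ≤ K := by
  refine f'.opNorm_le_bound hK fun u => abs_le.2 ⟨hf.neg_mul_norm_le_apply hmin u, ?_⟩
  have := hf.neg_mul_norm_le_apply hmin (-u)
  rw [norm_neg, map_neg] at this
  linarith

theorem exists_norm_eq_add_mul_le_of_lt_norm_fderiv [ProperSpace F] {f : F → ℝ}
    (hf : Differentiable ℝ f) {c R : ℝ} (hc : 0 ≤ c) (hR : 0 ≤ R)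
    (hgrad : ∀ x, c < ‖fderiv ℝ f x‖) : ∃ p, ‖p‖ = R ∧ f p + c * R ≤ f 0 := by
  obtain ⟨p, hpR, hpmin⟩ := (isCompact_closedBall (0 : F) R).exists_isMinOn
    (Metric.nonempty_closedBall.2 hR)
    (hf.continuous.add (continuous_const.mul continuous_norm)).continuousOn
  rw [mem_closedBall_zero_iff] at hpR
  have hp : ‖p‖ = R := by
    refine hpR.eq_of_not_lt fun hlt => (hgrad p).not_ge ?_
    refine (hf p).hasFDerivAt.norm_le_of_eventually_sub_mul_norm_le hc ?_
    filter_upwards [Metric.isOpen_ball.mem_nhds (mem_ball_zero_iff.2 hlt)] with y hy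
    have hy' : f p + c * ‖p‖ ≤ f y + c * ‖y‖ := hpmin (Metric.ball_subset_closedBall hy)
    nlinarith [norm_le_norm_add_norm_sub' y p]
  refine ⟨p, hp, ?_⟩
  simpa [hp] using hpmin (Metric.mem_closedBall_self hR)

theorem ConvexOn.smul_add_mul_le_of_le {f : F → ℝ} (hf : ConvexOn ℝ univ f) {v : F} {c t T : ℝ}
    (ht : 0 ≤ t) (htT : t ≤ T) (hT : f (T • v) + c * T ≤ f 0) : f (t • v) + c * t ≤ f 0 := by
  rcases ht.eq_or_lt with rfl | ht
  · simp
  have hT0 : 0 < T := ht.trans_le htT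
  have hcomb := hf.2 (mem_univ (T • v)) (mem_univ 0) (div_nonneg ht.le hT0.le)
    (sub_nonneg.2 ((div_le_one hT0).2 htT)) (add_sub_cancel _ _)
  rw [smul_zero, add_zero, smul_smul, div_mul_cancel₀ _ hT0.ne', smul_eq_mul, smul_eq_mul] at hcomb
  have key : t / T * (f (T • v) + c * T) ≤ t / T * f 0 :=
    mul_le_mul_of_nonneg_left hT (div_nonneg ht.le hT0.le)
  have : t / T * (c * T) = c * t := by field_simp
  linarith

theorem ConvexOn.exists_norm_eq_one_forall_add_mul_le [ProperSpace F] {f : F → ℝ}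
    (hf : ConvexOn ℝ univ f) (hfc : Continuous f) {c : ℝ}
    (h : ∀ R, 0 < R → ∃ p, ‖p‖ = R ∧ f p + c * R ≤ f 0) :
    ∃ v, ‖v‖ = 1 ∧ ∀ t, 0 ≤ t → f (t • v) + c * t ≤ f 0 := by
  let S : Ioi (0 : ℝ) → Set F := fun T => Metric.sphere 0 1 ∩ {v | f ((T : ℝ) • v) + c * T ≤ f 0}
  have hS_closed (T : Ioi (0 : ℝ)) : IsClosed (S T) :=
    Metric.isClosed_sphere.inter (isClosed_le (by fun_prop) continuous_const)
  have hS_dir : Directed (· ⊇ ·) S := by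
    intro T₁ T₂
    refine ⟨⟨max T₁ T₂, mem_Ioi.2 (lt_max_of_lt_left T₁.2)⟩, ?_, ?_⟩ <;> rintro v ⟨hv, hvT⟩ <;>
      refine ⟨hv, hf.smul_add_mul_le_of_le (le_of_lt (Subtype.prop _)) ?_ hvT⟩
    exacts [le_max_left _ _, le_max_right _ _]
  have hS_ne (T : Ioi (0 : ℝ)) : (S T).Nonempty := by
    obtain ⟨p, hp, hpT⟩ := h T T.2
    refine ⟨(T : ℝ)⁻¹ • p, ?_, ?_⟩
    · rw [mem_sphere_zero_iff_norm, norm_smul, norm_inv, hp, Real.norm_of_nonneg T.2.le,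
        inv_mul_cancel₀ T.2.ne']
    · show f _ + _ ≤ _
      rwa [smul_smul, mul_inv_cancel₀ T.2.ne', one_smul]
  obtain ⟨v, hv⟩ := IsCompact.nonempty_iInter_of_directed_nonempty_isCompact_isClosed S hS_dir
    hS_ne (fun T => (isCompact_sphere 0 1).of_isClosed_subset (hS_closed T) inter_subset_left)
    hS_closed
  rw [mem_iInter] at hv
  refine ⟨v, mem_sphere_zero_iff_norm.1 (hv ⟨1, mem_Ioi.2 one_pos⟩).1, fun t ht => ?_⟩
  rcases ht.eq_or_lt with rfl | ht
  · simp
  exact (hv ⟨t, ht⟩).2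

end

theorem le_neg_of_tendsto_div_of_add_mul_le {g : ℝ → ℝ} {a c s : ℝ}
    (hg : Tendsto (fun t => g t / t) atTop (𝓝 s)) (h : ∀ t, 0 ≤ t → g t + c * t ≤ a) :
    s ≤ -c := by
  have hlim : Tendsto (fun t => a / t - c) atTop (𝓝 (-c)) := by
    simpa using (tendsto_const_nhds.div_atTop tendsto_id).sub_const c
  refine le_of_tendsto_of_tendsto hg hlim ?_
  filter_upwards [eventually_gt_atTop 0] with t ht
  rw [le_sub_iff_add_le, le_div_iff₀ ht, add_mul, div_mul_cancel₀ _ ht.ne']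
  exact h t ht.le

theorem almost_critical_points_of_semistable_general
    {E : Type*} [NormedAddCommGroup E] [InnerProductSpace ℝ E]
    [FiniteDimensional ℝ E]
    (f : E → ℝ) (hconv : ConvexOn ℝ Set.univ f)
    (hdiff : ContDiff ℝ 1 f)
    (s : E → ℝ)
    (hs : ∀ v : E, Tendsto (fun t : ℝ => f (t • v) / t) atTop (nhds (s v)))
    (hss : ∀ v : E, ‖v‖ = 1 → 0 ≤ s v) :
    ∀ ε : ℝ, 0 < ε → ∃ p : E, ‖gradient f p‖ < ε := by
  intro ε hε
  by_contra! hcon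
  have hf : Differentiable ℝ f := hdiff.differentiable one_ne_zero
  have hgrad (x : E) : ε / 2 < ‖fderiv ℝ f x‖ := by
    rw [← toDual_gradient, LinearIsometryEquiv.norm_map]
    linarith [hcon x]
  obtain ⟨v, hv, hray⟩ := hconv.exists_norm_eq_one_forall_add_mul_le hf.continuous
    fun R hR => exists_norm_eq_add_mul_le_of_lt_norm_fderiv hf (by positivity) hR.le hgrad
  linarith [le_neg_of_tendsto_div_of_add_mul_le (hs v) hray, hss v hv]

/-- A convex, continuously differentiable Lipschitz function on a
finite-dimensional real inner product space whose asymptotic slopes are all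
nonnegative has almost critical points: the infimum of the norm of its
gradient is zero. -/
theorem almost_critical_points_of_semistable
    {E : Type*} [NormedAddCommGroup E] [InnerProductSpace ℝ E]
    [FiniteDimensional ℝ E]
    (f : E → ℝ) (hconv : ConvexOn ℝ Set.univ f)
    (hdiff : ContDiff ℝ 1 f)
    (C : NNReal) (hlip : LipschitzWith C f)
    (s : E → ℝ)
    (hs : ∀ v : E, Tendsto (fun t : ℝ => f (t • v) / t) atTop (nhds (s v)))
    (hss : ∀ v : E, ‖v‖ = 1 → 0 ≤ s v) :
    ∀ ε : ℝ, 0 < ε → ∃ p : E, ‖gradient f p‖ < ε :=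
  almost_critical_points_of_semistable_general f hconv hdiff s hs hss
end

section
/- Let E be a finite-dimensional real inner product space and let f : E → ℝ be a convex Lipschitz function. Suppose slope_f assumes a negative value, and let ξ be a unit vector at which slope_f attains its minimum over the unit sphere of E (so slope_f(ξ) < 0). Then for every unit vector η ∈ E one has slope_f(η) ≥ slope_f(ξ) · ⟨ξ, η⟩; i.e. the asymptotic slope of f is bounded below by slope_f(ξ) times the cosine of the angle to the direction of steepest asymptotic descent. -/
open Filter Topology
open scoped RealInnerProductSpace

/-!
The asymptotic slope `s` is positively homogeneous and, by convexity of `f`, subadditive.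
Minimality of `s ξ` on the unit sphere and homogeneity give `s ξ * ‖v‖ ≤ s v` for all `v`,
so for `t > 0`
`s ξ * ‖ξ + t • η‖ ≤ s (ξ + t • η) ≤ s ξ + t * s η`, i.e.
`s ξ * (‖ξ + t • η‖ - ‖ξ‖) / t ≤ s η`.
Letting `t → 0⁺`, the difference quotient tends to the derivative `⟪ξ, η⟫` of the norm at `ξ`.
-/

section AsymptoticSlope

variable {E : Type*} [AddCommGroup E] [Module ℝ E] {f s : E → ℝ}

theorem asymptoticSlope_smul_of_pos
    (hs : ∀ v : E, Tendsto (fun t : ℝ => f (t • v) / t) atTop (𝓝 (s v)))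
    {a : ℝ} (ha : 0 < a) (v : E) : s (a • v) = a * s v := by
  have hrescaled : Tendsto (fun t : ℝ => a * (f ((a * t) • v) / (a * t))) atTop
      (𝓝 (a * s v)) :=
    ((hs v).comp (tendsto_id.const_mul_atTop ha)).const_mul a
  refine tendsto_nhds_unique (hs (a • v)) (hrescaled.congr' ?_)
  filter_upwards [eventually_gt_atTop 0] with t ht
  rw [smul_smul, mul_comm t a]
  field_simp

theorem asymptoticSlope_add_le
    (hs : ∀ v : E, Tendsto (fun t : ℝ => f (t • v) / t) atTop (𝓝 (s v)))
    (hconv : ConvexOn ℝ Set.univ f) (u v : E) : s (u + v) ≤ s u + s v := by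
  have hdouble : ∀ w : E, Tendsto (fun t : ℝ => f ((2 * t) • w) / (2 * t)) atTop (𝓝 (s w)) :=
    fun w => (hs w).comp (tendsto_id.const_mul_atTop two_pos)
  refine le_of_tendsto_of_tendsto (hs (u + v)) ((hdouble u).add (hdouble v)) ?_
  filter_upwards [eventually_gt_atTop 0] with t ht
  have hmid : f (t • (u + v)) ≤ (1 / 2 : ℝ) • f ((2 * t) • u) + (1 / 2 : ℝ) • f ((2 * t) • v) := by
    have hcomb : (1 / 2 : ℝ) • ((2 * t) • u) + (1 / 2 : ℝ) • ((2 * t) • v) = t • (u + v) := by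
      rw [smul_smul, smul_smul, smul_add]
      congr 2 <;> ring
    rw [← hcomb]
    exact hconv.2 (Set.mem_univ _) (Set.mem_univ _) (by norm_num) (by norm_num) (by norm_num)
  have hrw : f ((2 * t) • u) / (2 * t) + f ((2 * t) • v) / (2 * t)
      = ((1 / 2 : ℝ) • f ((2 * t) • u) + (1 / 2 : ℝ) • f ((2 * t) • v)) / t := by
    simp only [smul_eq_mul]
    field_simp
  rw [hrw]
  gcongr

end AsymptoticSlope

theorem mul_norm_le_of_forall_norm_eq_one {E : Type*} [NormedAddCommGroup E] [NormedSpace ℝ E]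
    {s : E → ℝ} (hhom : ∀ a : ℝ, 0 < a → ∀ v : E, s (a • v) = a * s v)
    {c : ℝ} (hc : ∀ u : E, ‖u‖ = 1 → c ≤ s u) (v : E) : c * ‖v‖ ≤ s v := by
  rcases eq_or_ne v 0 with rfl | hv
  · have hs0 : s 0 = 2 * s 0 := by simpa using hhom 2 two_pos 0
    simp only [norm_zero, mul_zero]
    linarith
  · have hn : 0 < ‖v‖ := norm_pos_iff.mpr hv
    have hunit : ‖(‖v‖⁻¹ • v)‖ = 1 := by
      rw [norm_smul, norm_inv, norm_norm, inv_mul_cancel₀ hn.ne']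
    calc c * ‖v‖ ≤ s (‖v‖⁻¹ • v) * ‖v‖ := by gcongr; exact hc _ hunit
      _ = s v := by rw [mul_comm, ← hhom _ hn, smul_smul, mul_inv_cancel₀ hn.ne', one_smul]

section Geometry

variable {F : Type*} [NormedAddCommGroup F] [InnerProductSpace ℝ F]

theorem hasDerivAt_norm_add_smul {x : F} (hx : x ≠ 0) (v : F) :
    HasDerivAt (fun t : ℝ => ‖x + t • v‖) (⟪x, v⟫ / ‖x‖) 0 := by
  have hline : HasDerivAt (fun t : ℝ => x + t • v) v 0 :=
    ((hasDerivAt_id 0).smul_const v).const_add x |>.congr_deriv (one_smul ℝ v)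
  convert hline.norm_sq.sqrt (by simpa using hx) using 1
  · funext t
    rw [Real.sqrt_sq (norm_nonneg _)]
  · simp only [zero_smul, add_zero, Real.sqrt_sq (norm_nonneg _)]
    rw [mul_div_mul_left _ _ two_ne_zero]

theorem mul_inner_le_of_mul_norm_le {s : F → ℝ}
    (hhom : ∀ a : ℝ, 0 < a → ∀ v : F, s (a • v) = a * s v)
    (hsub : ∀ u v : F, s (u + v) ≤ s u + s v)
    {ξ : F} (hξ : ‖ξ‖ = 1) (hlow : ∀ v : F, s ξ * ‖v‖ ≤ s v) (η : F) :
    s ξ * ⟪ξ, η⟫ ≤ s η := by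
  have hderiv : HasDerivAt (fun t : ℝ => ‖ξ + t • η‖) ⟪ξ, η⟫ 0 := by
    simpa [hξ] using hasDerivAt_norm_add_smul (x := ξ) (norm_ne_zero_iff.mp (by simp [hξ])) η
  have hquot := (hderiv.tendsto_slope_zero_right).const_mul (s ξ)
  refine le_of_tendsto hquot ?_
  filter_upwards [self_mem_nhdsWithin] with t (ht : 0 < t)
  have hstep : s ξ * ‖ξ + t • η‖ ≤ s ξ + t * s η :=
    calc s ξ * ‖ξ + t • η‖ ≤ s (ξ + t • η) := hlow _
      _ ≤ s ξ + s (t • η) := hsub _ _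
      _ = s ξ + t * s η := by rw [hhom t ht]
  simp only [zero_add, zero_smul, add_zero, hξ, smul_eq_mul]
  rw [← mul_assoc, mul_comm (s ξ), mul_assoc, inv_mul_le_iff₀ ht]
  linarith

end Geometry

theorem asymptotic_slope_lower_bound_by_steepest_descent_general
    {E : Type*} [NormedAddCommGroup E] [InnerProductSpace ℝ E]
    (f : E → ℝ) (hconv : ConvexOn ℝ Set.univ f)
    (s : E → ℝ)
    (hs : ∀ v : E, Tendsto (fun t : ℝ => f (t • v) / t) atTop (nhds (s v)))
    (ξ : E) (hξ : ‖ξ‖ = 1)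
    (hmin : ∀ η : E, ‖η‖ = 1 → s ξ ≤ s η) :
    ∀ η : E, ‖η‖ = 1 → s ξ * (inner ℝ ξ η : ℝ) ≤ s η := by
  have hhom := fun a (ha : 0 < a) => asymptoticSlope_smul_of_pos hs ha
  intro η _
  exact mul_inner_le_of_mul_norm_le hhom (asymptoticSlope_add_le hs hconv) hξ
    (mul_norm_le_of_forall_norm_eq_one hhom hmin) η

/-- If the asymptotic slope of a convex Lipschitz function attains a negative
minimum over the unit sphere at the unit vector `ξ`, then for every unit
vector `η` we have `slope_f(η) ≥ slope_f(ξ)·⟨ξ, η⟩`. -/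
theorem asymptotic_slope_lower_bound_by_steepest_descent
    {E : Type*} [NormedAddCommGroup E] [InnerProductSpace ℝ E]
    [FiniteDimensional ℝ E]
    (f : E → ℝ) (hconv : ConvexOn ℝ Set.univ f)
    (C : NNReal) (hlip : LipschitzWith C f)
    (s : E → ℝ)
    (hs : ∀ v : E, Tendsto (fun t : ℝ => f (t • v) / t) atTop (nhds (s v)))
    (ξ : E) (hξ : ‖ξ‖ = 1) (hneg : s ξ < 0)
    (hmin : ∀ η : E, ‖η‖ = 1 → s ξ ≤ s η) :
    ∀ η : E, ‖η‖ = 1 → s ξ * (inner ℝ ξ η : ℝ) ≤ s η :=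
  asymptotic_slope_lower_bound_by_steepest_descent_general f hconv s hs ξ hξ hmin
end

section
/- Weak stability inequalities in geometric (convex-hull) form, Hermitian-matrix instance (Lidskii–Wielandt): Let A and B be m×m complex Hermitian matrices, and for a Hermitian matrix M let λ(M) = (λ₁(M) ≥ … ≥ λₘ(M)) ∈ ℝᵐ denote its eigenvalues listed with multiplicity in decreasing order. Then λ(A + B) − λ(A) lies in the convex hull of the set {(λ_{σ(1)}(B), …, λ_{σ(m)}(B)) : σ a permutation of {1,…,m}}; i.e. λ(A+B) ∈ λ(A) + conv(S_m · λ(B)). -/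
/-!
Weyl's inequalities come from a dimension count: if `A + t ≤ B`, the span of the eigenvectors of
`A` with eigenvalue `≥ a k` and that of the eigenvectors of `B` with eigenvalue `≤ b k` have
dimensions adding up to more than `m`, so they share a unit vector `x`, and
`a k + t ≤ ⟪A x, x⟫ + t ≤ ⟪B x, x⟫ ≤ b k`.

Lidskii's majorization `∑_{i ∈ I} (c i - a i) ≤ b 0 + ⋯ + b (#I - 1)` follows by comparing both
`A + B` and `A + β` with `A + P` in Weyl's inequalities, where `P = max(B, β)` is `B` with its
spectrum clipped from below at `β = b (#I - 1)`, and then taking traces.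

Majorization with equal totals places `c - a` in the convex hull of the permutations of `b`:
otherwise a separating functional `x ↦ ∑ i, u i * x i` would contradict Abel summation once `u` is
sorted.
-/

open Finset
open scoped InnerProductSpace MatrixOrder

section Rayleigh

variable {𝕜 E ι : Type*} [RCLike 𝕜] [NormedAddCommGroup E] [InnerProductSpace 𝕜 E] [Fintype ι]
  (b : OrthonormalBasis ι 𝕜 E) {T : E →ₗ[𝕜] E} {μ : ι → ℝ}

theorem OrthonormalBasis.re_inner_apply_self (hT : ∀ i, T (b i) = (μ i : 𝕜) • b i) (x : E) :
    RCLike.re ⟪T x, x⟫_𝕜 = ∑ i, μ i * ‖⟪b i, x⟫_𝕜‖ ^ 2 := by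
  nth_rw 1 [← b.sum_repr' x]
  rw [map_sum, sum_inner, map_sum]
  refine Finset.sum_congr rfl fun i _ => ?_
  rw [map_smul, hT, inner_smul_left, inner_smul_left, RCLike.conj_ofReal, ← mul_assoc,
    mul_comm _ (μ i : 𝕜), mul_assoc, RCLike.conj_mul, ← RCLike.ofReal_pow, ← RCLike.ofReal_mul,
    RCLike.ofReal_re]

theorem OrthonormalBasis.inner_eq_zero_of_mem_span {s : Set ι} {x : E}
    (hx : x ∈ Submodule.span 𝕜 (b '' s)) {i : ι} (hi : i ∉ s) : ⟪b i, x⟫_𝕜 = 0 := by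
  refine (Submodule.mem_orthogonal_singleton_iff_inner_right).mp
    (Submodule.span_le.mpr ?_ hx)
  rintro _ ⟨j, hj, rfl⟩
  exact Submodule.mem_orthogonal_singleton_iff_inner_right.mpr
    (b.orthonormal.inner_eq_zero (ne_of_mem_of_not_mem hj hi).symm)

theorem OrthonormalBasis.mul_norm_sq_le_re_inner_apply_self (hT : ∀ i, T (b i) = (μ i : 𝕜) • b i)
    {s : Set ι} {c : ℝ} (hs : ∀ i ∈ s, c ≤ μ i) {x : E} (hx : x ∈ Submodule.span 𝕜 (b '' s)) :
    c * ‖x‖ ^ 2 ≤ RCLike.re ⟪T x, x⟫_𝕜 := by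
  rw [b.re_inner_apply_self hT, ← b.sum_sq_norm_inner_right, mul_sum]
  refine sum_le_sum fun i _ => ?_
  by_cases hi : i ∈ s
  · gcongr
    exact hs i hi
  · simp [b.inner_eq_zero_of_mem_span hx hi]

theorem OrthonormalBasis.re_inner_apply_self_le_mul_norm_sq (hT : ∀ i, T (b i) = (μ i : 𝕜) • b i)
    {s : Set ι} {c : ℝ} (hs : ∀ i ∈ s, μ i ≤ c) {x : E} (hx : x ∈ Submodule.span 𝕜 (b '' s)) :
    RCLike.re ⟪T x, x⟫_𝕜 ≤ c * ‖x‖ ^ 2 := by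
  rw [b.re_inner_apply_self hT, ← b.sum_sq_norm_inner_right, mul_sum]
  refine sum_le_sum fun i _ => ?_
  by_cases hi : i ∈ s
  · gcongr
    exact hs i hi
  · simp [b.inner_eq_zero_of_mem_span hx hi]

theorem OrthonormalBasis.finrank_span_image_finset (s : Finset ι) :
    Module.finrank 𝕜 (Submodule.span 𝕜 (b '' s)) = #s := by
  rw [Set.image_eq_range, finrank_span_eq_card]
  · simp
  · exact b.orthonormal.linearIndependent.comp _ Subtype.coe_injective

theorem add_le_of_finrank_lt_card_add_card [FiniteDimensional 𝕜 E] {κ : Type*} [Fintype κ]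
    (e : OrthonormalBasis ι 𝕜 E) (f : OrthonormalBasis κ 𝕜 E) {T S : E →ₗ[𝕜] E}
    {μ : ι → ℝ} {ν : κ → ℝ} (hT : ∀ i, T (e i) = (μ i : 𝕜) • e i)
    (hS : ∀ j, S (f j) = (ν j : 𝕜) • f j) {t s r : ℝ}
    (hTS : ∀ x, RCLike.re ⟪T x, x⟫_𝕜 + t * ‖x‖ ^ 2 ≤ RCLike.re ⟪S x, x⟫_𝕜)
    (hcard : Module.finrank 𝕜 E < #{i | s ≤ μ i} + #{j | ν j ≤ r}) : s + t ≤ r := by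
  set V := Submodule.span 𝕜 (e '' ↑({i | s ≤ μ i} : Finset ι))
  set W := Submodule.span 𝕜 (f '' ↑({j | ν j ≤ r} : Finset κ))
  have hVW : ¬ Disjoint V W := fun h => hcard.not_ge <| by
    simpa [V, W, e.finrank_span_image_finset, f.finrank_span_image_finset] using
      Submodule.finrank_add_finrank_le_of_disjoint h
  obtain ⟨x, hxV, hxW, hx⟩ : ∃ x ∈ V, x ∈ W ∧ x ≠ 0 := by
    simpa [Submodule.disjoint_def] using hVW
  have h1 := e.mul_norm_sq_le_re_inner_apply_self hT (c := s) (by simp) hxV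
  have h2 := f.re_inner_apply_self_le_mul_norm_sq hS (c := r) (by simp) hxW
  have hx2 : 0 < ‖x‖ ^ 2 := by positivity
  nlinarith [hTS x]

end Rayleigh

section Majorization

variable {m : ℕ}

theorem exists_antitone_comp_perm {α : Type*} [LinearOrder α] (f : Fin m → α) :
    ∃ (g : Fin m → α) (σ : Equiv.Perm (Fin m)), Antitone g ∧ ∀ j, f j = g (σ j) :=
  ⟨f ∘ Tuple.sort (OrderDual.toDual ∘ f), (Tuple.sort (OrderDual.toDual ∘ f))⁻¹,
    monotone_toDual_comp_iff.mp (Tuple.monotone_sort _), fun j => by simp⟩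

theorem sum_mul_nonneg_of_sum_Iic_nonneg {u d : Fin m → ℝ} (hu : Antitone u) (hu₀ : 0 ≤ u)
    (hd : ∀ k, 0 ≤ ∑ j ∈ Iic k, d j) : 0 ≤ ∑ j, u j * d j := by
  induction m with
  | zero => simp
  | succ m ih =>
    have hsplit : ∑ j, u j * d j = ∑ j : Fin m, (u j.castSucc - u (Fin.last m)) * d j.castSucc
        + u (Fin.last m) * ∑ j, d j := by
      simp only [Fin.sum_univ_castSucc, sub_mul, sum_sub_distrib, mul_add, mul_sum]
      ring
    rw [hsplit]
    have hu' : Antitone fun j : Fin m => u j.castSucc - u (Fin.last m) :=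
      fun i j hij => sub_le_sub_right (hu (Fin.castSucc_le_castSucc_iff.mpr hij)) _
    refine add_nonneg (ih hu' (fun j => sub_nonneg.mpr (hu (Fin.le_last _))) fun k => ?_)
      (mul_nonneg (hu₀ _) ?_)
    · simpa [← Fin.map_castSuccEmb_Iic] using hd k.castSucc
    · simpa [← Fin.top_eq_last, Iic_top] using hd (Fin.last m)

theorem sum_mul_le_sum_mul_of_sum_Iic_le {u y z : Fin m → ℝ} (hu : Antitone u)
    (h : ∀ k, ∑ j ∈ Iic k, y j ≤ ∑ j ∈ Iic k, z j) (htot : ∑ j, y j = ∑ j, z j) :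
    ∑ j, u j * y j ≤ ∑ j, u j * z j := by
  cases m with
  | zero => simp
  | succ m =>
    have := sum_mul_nonneg_of_sum_Iic_nonneg (u := u - fun _ => u (Fin.last m)) (d := z - y)
      (fun i j hij => sub_le_sub_right (hu hij) _) (fun j => sub_nonneg.mpr (hu (Fin.le_last j)))
      (fun k => by simpa [sum_sub_distrib] using h k)
    simp only [Pi.sub_apply, sub_mul, mul_sub, sum_sub_distrib, ← mul_sum, htot] at this
    linarith

theorem mem_convexHull_comp_perm_of_sum_le {y b : Fin m → ℝ}
    (hy : ∀ (I : Finset (Fin m)) (k : Fin m), #I = k + 1 → ∑ i ∈ I, y i ≤ ∑ j ∈ Iic k, b j)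
    (htot : ∑ i, y i = ∑ i, b i) :
    y ∈ convexHull ℝ {x | ∃ σ : Equiv.Perm (Fin m), x = b ∘ σ} := by
  by_contra hy_not
  have hfin : {x | ∃ σ : Equiv.Perm (Fin m), x = b ∘ σ}.Finite :=
    (Set.finite_range fun σ : Equiv.Perm (Fin m) => b ∘ σ).subset fun _ ⟨σ, hσ⟩ => ⟨σ, hσ.symm⟩
  obtain ⟨f, s, hfs, hsy⟩ := geometric_hahn_banach_closed_point (convex_convexHull ℝ _)
    (hfin.isClosed_convexHull (𝕜 := ℝ)) hy_not
  set u : Fin m → ℝ := fun i => f fun j => if i = j then 1 else 0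
  have hf (x : Fin m → ℝ) : f x = ∑ i, u i * x i := by
    rw [← f.coe_coe, LinearMap.pi_apply_eq_sum_univ]
    simp [u, mul_comm]
  obtain ⟨g, τ, hg, hu⟩ := exists_antitone_comp_perm u
  have hfb : f (b ∘ τ) = ∑ j, g j * b j := by
    simp_rw [hf, hu]
    exact Equiv.sum_comp τ fun j => g j * b j
  have hfy : f y = ∑ j, g j * y (τ.symm j) := by
    rw [hf, ← Equiv.sum_comp τ.symm]
    simp [hu]
  have hle : f y ≤ f (b ∘ τ) := by
    rw [hfy, hfb]
    refine sum_mul_le_sum_mul_of_sum_Iic_le hg (fun k => ?_) ?_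
    · simpa using hy ((Iic k).map τ.symm.toEmbedding) k (by simp)
    · rw [← htot]
      exact Equiv.sum_comp τ.symm y
  linarith [hfs _ (subset_convexHull ℝ _ ⟨τ, rfl⟩)]

end Majorization

namespace Matrix

variable {𝕜 n : Type*} [RCLike 𝕜] [Fintype n] [DecidableEq n]

theorem IsHermitian.toEuclideanLin_eigenvectorBasis {A : Matrix n n 𝕜} (hA : A.IsHermitian)
    (i : n) : A.toEuclideanLin (hA.eigenvectorBasis i) =
      (hA.eigenvalues i : 𝕜) • hA.eigenvectorBasis i := by
  rw [toLpLin_apply, hA.mulVec_eigenvectorBasis, ← RCLike.real_smul_eq_coe_smul (K := 𝕜)]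
  rfl

theorem re_inner_toEuclideanLin_le_of_add_smul_one_le {A B : Matrix n n 𝕜} {t : ℝ}
    (hAB : A + t • 1 ≤ B) (x : EuclideanSpace 𝕜 n) :
    RCLike.re ⟪A.toEuclideanLin x, x⟫_𝕜 + t * ‖x‖ ^ 2 ≤ RCLike.re ⟪B.toEuclideanLin x, x⟫_𝕜 := by
  have ht : toEuclideanLin (t • 1 : Matrix n n 𝕜) x = (t : 𝕜) • x := by
    rw [← RCLike.real_smul_eq_coe_smul (K := 𝕜), toLpLin_apply, smul_mulVec, one_mulVec]
    rfl
  have := (isPositive_toEuclideanLin_iff.mpr (le_iff.mp hAB)).re_inner_nonneg_left x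
  rw [map_sub, map_add, LinearMap.sub_apply, LinearMap.add_apply, ht, inner_sub_left,
    inner_add_left, inner_smul_left, RCLike.conj_ofReal, inner_self_eq_norm_sq_to_K,
    ← RCLike.ofReal_pow, ← RCLike.ofReal_mul, map_sub, map_add, RCLike.ofReal_re] at this
  linarith

theorem trace_cfc {A : Matrix n n 𝕜} (hA : A.IsHermitian) (f : ℝ → ℝ) :
    (cfc f A).trace = ∑ i, (f (hA.eigenvalues i) : 𝕜) := by
  rw [hA.cfc_eq, IsHermitian.cfc, Unitary.conjStarAlgAut_apply, trace_mul_cycle,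
    Unitary.coe_star_mul_self, one_mul, trace_diagonal]
  rfl

variable {m : ℕ}

def IsHermitian.HasSortedEigenvalues {A : Matrix (Fin m) (Fin m) 𝕜} (hA : A.IsHermitian)
    (a : Fin m → ℝ) : Prop :=
  Antitone a ∧ ∃ σ : Equiv.Perm (Fin m), ∀ j, hA.eigenvalues j = a (σ j)

theorem IsHermitian.exists_hasSortedEigenvalues {A : Matrix (Fin m) (Fin m) 𝕜}
    (hA : A.IsHermitian) : ∃ a, hA.HasSortedEigenvalues a := by
  obtain ⟨a, σ, ha, hσ⟩ := exists_antitone_comp_perm hA.eigenvalues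
  exact ⟨a, ha, σ, hσ⟩

namespace IsHermitian.HasSortedEigenvalues

variable {A B : Matrix (Fin m) (Fin m) 𝕜} {hA : A.IsHermitian} {hB : B.IsHermitian}
  {a b : Fin m → ℝ}

theorem trace_eq (ha : hA.HasSortedEigenvalues a) : A.trace = ∑ i, (a i : 𝕜) := by
  obtain ⟨σ, hσ⟩ := ha.2
  simp_rw [hA.trace_eq_sum_eigenvalues, hσ]
  exact Equiv.sum_comp σ fun i => (a i : 𝕜)

theorem le_card_filter_le (ha : hA.HasSortedEigenvalues a) (k : Fin m) :
    k + 1 ≤ #{i | a k ≤ hA.eigenvalues i} := by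
  obtain ⟨σ, hσ⟩ := ha.2
  rw [← Fin.card_Iic, ← card_map σ.symm.toEmbedding]
  refine card_le_card fun i hi => ?_
  simp only [mem_map_equiv, Equiv.symm_symm, mem_Iic] at hi
  simpa [hσ] using ha.1 hi

theorem le_card_filter_ge (ha : hA.HasSortedEigenvalues a) (k : Fin m) :
    m - k ≤ #{i | hA.eigenvalues i ≤ a k} := by
  obtain ⟨σ, hσ⟩ := ha.2
  rw [← Fin.card_Ici, ← card_map σ.symm.toEmbedding]
  refine card_le_card fun i hi => ?_
  simp only [mem_map_equiv, Equiv.symm_symm, mem_Ici] at hi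
  simpa [hσ] using ha.1 hi

theorem add_le_of_add_smul_one_le (ha : hA.HasSortedEigenvalues a)
    (hb : hB.HasSortedEigenvalues b) {t : ℝ} (hAB : A + t • 1 ≤ B) (k : Fin m) : a k + t ≤ b k := by
  refine add_le_of_finrank_lt_card_add_card hA.eigenvectorBasis hB.eigenvectorBasis
    hA.toEuclideanLin_eigenvectorBasis hB.toEuclideanLin_eigenvectorBasis
    (re_inner_toEuclideanLin_le_of_add_smul_one_le hAB) ?_
  have := ha.le_card_filter_le k
  have := hb.le_card_filter_ge k
  rw [finrank_euclideanSpace_fin]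
  omega

theorem sum_add (ha : hA.HasSortedEigenvalues a) (hb : hB.HasSortedEigenvalues b)
    {c : Fin m → ℝ} (hc : (hA.add hB).HasSortedEigenvalues c) :
    ∑ i, c i = ∑ i, a i + ∑ i, b i := by
  have := trace_add A B
  rw [hc.trace_eq, ha.trace_eq, hb.trace_eq] at this
  exact_mod_cast this

theorem sum_sub_le_sum_eigenvalues (ha : hA.HasSortedEigenvalues a) {c : Fin m → ℝ}
    (hc : (hA.add hB).HasSortedEigenvalues c) {I J : Finset (Fin m)} (hIJ : #I = #J) {β : ℝ}
    (hJ : ∀ j ∈ J, β ≤ hB.eigenvalues j) (hJc : ∀ j ∉ J, hB.eigenvalues j ≤ β) :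
    ∑ i ∈ I, (c i - a i) ≤ ∑ j ∈ J, hB.eigenvalues j := by
  set P := cfc (fun x => max x β) B
  have hP : P.IsHermitian := IsSelfAdjoint.isHermitian (cfc_predicate _ B)
  have hBP : B ≤ P := by
    conv_lhs => rw [← cfc_id' ℝ B hB.isSelfAdjoint]
    exact cfc_mono fun x _ => le_max_left x β
  have hβP : β • 1 ≤ P := by
    rw [← Algebra.algebraMap_eq_smul_one]
    exact algebraMap_le_cfc _ _ _ fun x _ => le_max_right x β
  obtain ⟨e, he⟩ := (hA.add hP).exists_hasSortedEigenvalues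
  have hce (i) : c i ≤ e i := by
    simpa using hc.add_le_of_add_smul_one_le he (t := 0) (by simpa using add_le_add_right hBP A) i
  have hae (i) : a i + β ≤ e i := ha.add_le_of_add_smul_one_le he (add_le_add_right hβP A) i
  have htr : ∑ i, e i = ∑ i, a i + ∑ j, max (hB.eigenvalues j) β := by
    have := trace_add A P
    rw [he.trace_eq, ha.trace_eq, trace_cfc hB] at this
    exact_mod_cast this
  have hmax : ∑ j, max (hB.eigenvalues j) β = ∑ j ∈ J, hB.eigenvalues j + #Jᶜ • β := by
    rw [← sum_add_sum_compl J, ← sum_const]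
    congr 1 <;> refine sum_congr rfl fun j hj => ?_
    · exact max_eq_left (hJ j hj)
    · exact max_eq_right (hJc j (mem_compl.mp hj))
  calc ∑ i ∈ I, (c i - a i) ≤ ∑ i ∈ I, (e i - a i) := sum_le_sum fun i _ => by linarith [hce i]
    _ = ∑ i, (e i - a i) - ∑ i ∈ Iᶜ, (e i - a i) := by rw [← sum_add_sum_compl I]; ring
    _ ≤ ∑ i, (e i - a i) - #Iᶜ • β :=
      sub_le_sub_left (card_nsmul_le_sum _ _ _ fun i _ => by linarith [hae i]) _
    _ = ∑ j ∈ J, hB.eigenvalues j := by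
      rw [sum_sub_distrib, htr, hmax, card_compl, card_compl, hIJ]
      ring

theorem sum_sub_le_sum_Iic (ha : hA.HasSortedEigenvalues a) (hb : hB.HasSortedEigenvalues b)
    {c : Fin m → ℝ} (hc : (hA.add hB).HasSortedEigenvalues c) {I : Finset (Fin m)} {k : Fin m}
    (hI : #I = k + 1) : ∑ i ∈ I, (c i - a i) ≤ ∑ j ∈ Iic k, b j := by
  obtain ⟨σ, hσ⟩ := hb.2
  have hJ : ∑ j ∈ Iic k, b j = ∑ j ∈ (Iic k).map σ.symm.toEmbedding, hB.eigenvalues j := by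
    simp [hσ]
  rw [hJ]
  refine ha.sum_sub_le_sum_eigenvalues hc (by simp [hI]) (β := b k) (fun j hj => ?_)
    (fun j hj => ?_)
  · simp only [mem_map_equiv, Equiv.symm_symm, mem_Iic] at hj
    rw [hσ]
    exact hb.1 hj
  · simp only [mem_map_equiv, Equiv.symm_symm, mem_Iic, not_le] at hj
    rw [hσ]
    exact hb.1 hj.le

end IsHermitian.HasSortedEigenvalues

end Matrix

/-- Lidskii–Wielandt (weak stability inequalities in convex-hull form) for
Hermitian matrices: if `a`, `b`, `c` are the decreasingly ordered spectra of
the Hermitian matrices `A`, `B` and `A + B` respectively, then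
`c - a` lies in the convex hull of the orbit of `b` under coordinate
permutations. -/
theorem lidskii_wielandt_hermitian
    (m : ℕ) (A B : Matrix (Fin m) (Fin m) ℂ)
    (hA : A.IsHermitian) (hB : B.IsHermitian)
    (a b c : Fin m → ℝ)
    (ha : Antitone a) (hb : Antitone b) (hc : Antitone c)
    (hae : ∃ σ : Equiv.Perm (Fin m), ∀ j, hA.eigenvalues j = a (σ j))
    (hbe : ∃ σ : Equiv.Perm (Fin m), ∀ j, hB.eigenvalues j = b (σ j))
    (hce : ∃ σ : Equiv.Perm (Fin m), ∀ j, (hA.add hB).eigenvalues j = c (σ j)) :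
    c - a ∈ convexHull ℝ {x : Fin m → ℝ | ∃ σ : Equiv.Perm (Fin m), x = b ∘ σ} := by
  have hsa : hA.HasSortedEigenvalues a := ⟨ha, hae⟩
  have hsb : hB.HasSortedEigenvalues b := ⟨hb, hbe⟩
  have hsc : (hA.add hB).HasSortedEigenvalues c := ⟨hc, hce⟩
  refine mem_convexHull_comp_perm_of_sum_le (fun I k hI => ?_) ?_
  · simpa using hsa.sum_sub_le_sum_Iic hsb hsc hI
  · simp only [Pi.sub_apply, sum_sub_distrib, hsa.sum_add hsb hsc]
    ring
end

section
/- Fixed points of nonexpansive maps with bounded orbits (Hilbert space case): Let H be a real Hilbert space (a complete real inner product space) and let Φ : H → H be a map which is 1-Lipschitz, i.e. ‖Φ(x) − Φ(y)‖ ≤ ‖x − y‖ for all x, y ∈ H. If there exists a point y ∈ H whose forward orbit {Φⁿ(y) : n ≥ 0} is bounded, then Φ has a fixed point in H. -/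
open Filter Topology

set_option maxHeartbeats 1000000

/-- A 1-Lipschitz (nonexpansive) self-map of a real Hilbert space with a
bounded forward orbit has a fixed point. -/
theorem fixed_point_of_nonexpansive_of_bounded_orbit
    {H : Type*} [NormedAddCommGroup H] [InnerProductSpace ℝ H] [CompleteSpace H]
    (Φ : H → H) (hΦ : LipschitzWith 1 Φ)
    (y : H) (hb : Bornology.IsBounded (Set.range fun n : ℕ => Φ^[n] y)) :
    ∃ x : H, Φ x = x := by
  obtain ⟨M, hM⟩ := isBounded_iff_forall_norm_le.mp hb
  set a : ℕ → H := fun n => Φ^[n] y with ha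
  have hMn : ∀ n, ‖a n‖ ≤ M := fun n => hM _ ⟨n, rfl⟩
  set g : H → ℝ := fun x => limsup (fun n => ‖a n - x‖ ^ 2) atTop with hg
  -- basic bounds
  have hub : ∀ (x : H) (n : ℕ), ‖a n - x‖ ^ 2 ≤ (M + ‖x‖) ^ 2 := by
    intro x n
    have h1 : ‖a n - x‖ ≤ M + ‖x‖ := (norm_sub_le _ _).trans (by linarith [hMn n])
    exact pow_le_pow_left₀ (norm_nonneg _) h1 2
  have hba : ∀ x : H, IsBoundedUnder (· ≤ ·) atTop (fun n => ‖a n - x‖ ^ 2) :=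
    fun x => isBoundedUnder_of ⟨(M + ‖x‖) ^ 2, hub x⟩
  have hbb : ∀ x : H, IsBoundedUnder (· ≥ ·) atTop (fun n => ‖a n - x‖ ^ 2) :=
    fun x => isBoundedUnder_of ⟨0, fun n => sq_nonneg _⟩
  have hcb : ∀ x : H, IsCoboundedUnder (· ≤ ·) atTop (fun n => ‖a n - x‖ ^ 2) :=
    fun x => (hbb x).isCoboundedUnder_le
  have hcbg : ∀ x : H, IsCoboundedUnder (· ≥ ·) atTop (fun n => ‖a n - x‖ ^ 2) :=
    fun x => (hba x).isCoboundedUnder_ge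
  have hg0 : ∀ x, 0 ≤ g x := fun x =>
    le_limsup_of_frequently_le (Frequently.of_forall fun n => sq_nonneg _) (hba x)
  -- g is nonincreasing along Φ
  have hdec : ∀ x, g (Φ x) ≤ g x := by
    intro x
    have hshift : g (Φ x) = limsup (fun n => ‖a (n + 1) - Φ x‖ ^ 2) atTop :=
      (limsup_nat_add (fun n => ‖a n - Φ x‖ ^ 2) 1).symm
    rw [hshift]
    refine limsup_le_limsup (Eventually.of_forall fun n => ?_) ?_ (hba x)
    · have h1 : ‖a (n + 1) - Φ x‖ ≤ ‖a n - x‖ := by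
        have h2 : a (n + 1) = Φ (a n) := Function.iterate_succ_apply' Φ n y
        rw [h2, ← dist_eq_norm, ← dist_eq_norm]
        simpa using hΦ.dist_le_mul (a n) x
      exact pow_le_pow_left₀ (norm_nonneg _) h1 2
    · exact IsBoundedUnder.isCoboundedUnder_le (isBoundedUnder_of ⟨0, fun n => sq_nonneg _⟩)
  -- halving lemma for limsup
  have hhalf : ∀ x : H, limsup (fun n => ‖a n - x‖ ^ 2 / 2) atTop = g x / 2 := by
    intro x
    have hmono : Monotone (fun t : ℝ => t / 2) := fun s t h => by linarith
    exact (hmono.map_limsup_of_continuousAt (fun n => ‖a n - x‖ ^ 2)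
      ((continuous_id.div_const 2).continuousAt) (hba x) (hcb x)).symm
  -- midpoint (uniform convexity) inequality
  have key : ∀ x z : H, g ((2:ℝ)⁻¹ • (x + z)) ≤ (g x + g z) / 2 - ‖x - z‖ ^ 2 / 4 := by
    intro x z
    have hpt : ∀ n, ‖a n - (2:ℝ)⁻¹ • (x + z)‖ ^ 2
        = ‖a n - x‖ ^ 2 / 2 + ‖a n - z‖ ^ 2 / 2 - ‖x - z‖ ^ 2 / 4 := by
      intro n
      have hpar := parallelogram_law_with_norm ℝ (a n - x) (a n - z)
      have h1 : (a n - x) + (a n - z) = (2:ℝ) • (a n - (2:ℝ)⁻¹ • (x + z)) := by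
        module
      have h2 : (a n - x) - (a n - z) = z - x := by abel
      rw [h1, h2, norm_smul, norm_sub_rev z x] at hpar
      have h3 : ‖(2:ℝ)‖ = 2 := by norm_num
      rw [h3] at hpar
      nlinarith [hpar]
    have e1 : g ((2:ℝ)⁻¹ • (x + z))
        = limsup (fun n => (‖a n - x‖ ^ 2 / 2 + ‖a n - z‖ ^ 2 / 2) - ‖x - z‖ ^ 2 / 4) atTop := by
      have efun : (fun n => ‖a n - (2:ℝ)⁻¹ • (x + z)‖ ^ 2)
          = fun n => (‖a n - x‖ ^ 2 / 2 + ‖a n - z‖ ^ 2 / 2) - ‖x - z‖ ^ 2 / 4 := by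
        funext n
        rw [hpt n]
      show limsup (fun n => ‖a n - (2:ℝ)⁻¹ • (x + z)‖ ^ 2) atTop = _
      rw [efun]
    have hbs : IsBoundedUnder (· ≤ ·) atTop
        (fun n => ‖a n - x‖ ^ 2 / 2 + ‖a n - z‖ ^ 2 / 2) :=
      isBoundedUnder_of ⟨(M + ‖x‖) ^ 2 / 2 + (M + ‖z‖) ^ 2 / 2, fun n => by
          have := hub x n; have := hub z n; linarith⟩
    have hcs : IsCoboundedUnder (· ≤ ·) atTop
        (fun n => ‖a n - x‖ ^ 2 / 2 + ‖a n - z‖ ^ 2 / 2) :=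
      IsBoundedUnder.isCoboundedUnder_le
        (isBoundedUnder_of ⟨0, fun n => by positivity⟩)
    have e2 : limsup (fun n => (‖a n - x‖ ^ 2 / 2 + ‖a n - z‖ ^ 2 / 2) - ‖x - z‖ ^ 2 / 4) atTop
        = limsup (fun n => ‖a n - x‖ ^ 2 / 2 + ‖a n - z‖ ^ 2 / 2) atTop - ‖x - z‖ ^ 2 / 4 :=
      limsup_sub_const atTop _ _ hbs hcs
    have e3 : limsup (fun n => ‖a n - x‖ ^ 2 / 2 + ‖a n - z‖ ^ 2 / 2) atTop
        ≤ g x / 2 + g z / 2 := by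
      have h4 : limsup ((fun n => ‖a n - x‖ ^ 2 / 2) + (fun n => ‖a n - z‖ ^ 2 / 2)) atTop
          ≤ limsup (fun n => ‖a n - x‖ ^ 2 / 2) atTop
            + limsup (fun n => ‖a n - z‖ ^ 2 / 2) atTop := by
        refine limsup_add_le ?_ ?_ ?_ ?_
        · exact isBoundedUnder_of ⟨0, fun n => by positivity⟩
        · exact isBoundedUnder_of ⟨(M + ‖x‖) ^ 2 / 2, fun n => by
            have := hub x n; linarith⟩
        · exact IsBoundedUnder.isCoboundedUnder_le
            (isBoundedUnder_of ⟨0, fun n => by positivity⟩)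
        · exact isBoundedUnder_of ⟨(M + ‖z‖) ^ 2 / 2, fun n => by
            have := hub z n; linarith⟩
      rw [hhalf x, hhalf z] at h4
      exact h4
    rw [e1, e2]
    linarith
  -- local Lipschitz-type continuity estimate
  have hcont : ∀ x z : H, g x ≤ g z + (2 * (M + ‖z‖) + ‖x - z‖) * ‖x - z‖ := by
    intro x z
    have hpt : ∀ n, ‖a n - x‖ ^ 2
        ≤ ‖a n - z‖ ^ 2 + (2 * (M + ‖z‖) + ‖x - z‖) * ‖x - z‖ := by
      intro n
      have h1 : ‖a n - x‖ ≤ ‖a n - z‖ + ‖x - z‖ := by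
        have := dist_triangle (a n) z x
        rw [dist_eq_norm, dist_eq_norm, dist_eq_norm] at this
        rw [norm_sub_rev x z]
        linarith
      have h2 : ‖a n - z‖ ≤ M + ‖z‖ := (norm_sub_le _ _).trans (by linarith [hMn n])
      nlinarith [norm_nonneg (a n - x), norm_nonneg (a n - z), norm_nonneg (x - z)]
    calc g x ≤ limsup (fun n => ‖a n - z‖ ^ 2 + (2 * (M + ‖z‖) + ‖x - z‖) * ‖x - z‖) atTop := by
          refine limsup_le_limsup (Eventually.of_forall hpt) (hcb x)
            (isBoundedUnder_of ⟨(M + ‖z‖) ^ 2 + (2 * (M + ‖z‖) + ‖x - z‖) * ‖x - z‖,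
              fun n => by have := hub z n; linarith⟩)
      _ = g z + (2 * (M + ‖z‖) + ‖x - z‖) * ‖x - z‖ :=
          limsup_add_const atTop _ _ (hba z) (hcb z)
  -- the infimum of g
  have hne : (Set.range g).Nonempty := ⟨g y, y, rfl⟩
  have hbdd : BddBelow (Set.range g) := ⟨0, by rintro _ ⟨x, rfl⟩; exact hg0 x⟩
  set d := sInf (Set.range g) with hd
  have hdle : ∀ x, d ≤ g x := fun x => csInf_le hbdd ⟨x, rfl⟩
  have hseq : ∀ k : ℕ, ∃ x : H, g x < d + 1 / ((k:ℝ) + 1) := by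
    intro k
    obtain ⟨_, ⟨x, rfl⟩, hx⟩ := Real.lt_sInf_add_pos hne
      (show (0:ℝ) < 1 / ((k:ℝ) + 1) by positivity)
    exact ⟨x, hx⟩
  choose x hx using hseq
  -- the minimizing sequence is Cauchy
  have hdist : ∀ k l, ‖x k - x l‖ ^ 2 ≤ 2 * (1 / ((k:ℝ) + 1) + 1 / ((l:ℝ) + 1)) := by
    intro k l
    have h1 := key (x k) (x l)
    have h2 := hdle ((2:ℝ)⁻¹ • (x k + x l))
    have h3 := (hx k).le
    have h4 := (hx l).le
    linarith
  have hcauchy : CauchySeq x := by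
    refine cauchySeq_of_le_tendsto_0 (fun N => Real.sqrt (4 / ((N:ℝ) + 1))) ?_ ?_
    · intro m n N hm hn
      rw [dist_eq_norm]
      have hsq : ‖x m - x n‖ ^ 2 ≤ 4 / ((N:ℝ) + 1) := by
        have e1 : 1 / ((m:ℝ) + 1) ≤ 1 / ((N:ℝ) + 1) := by
          apply one_div_le_one_div_of_le (by positivity)
          have : (N:ℝ) ≤ m := Nat.cast_le.mpr hm
          linarith
        have e2 : 1 / ((n:ℝ) + 1) ≤ 1 / ((N:ℝ) + 1) := by
          apply one_div_le_one_div_of_le (by positivity)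
          have : (N:ℝ) ≤ n := Nat.cast_le.mpr hn
          linarith
        have := hdist m n
        have e3 : 4 / ((N:ℝ) + 1) = 2 * (1 / ((N:ℝ) + 1) + 1 / ((N:ℝ) + 1)) := by ring
        linarith
      calc ‖x m - x n‖ = Real.sqrt (‖x m - x n‖ ^ 2) := (Real.sqrt_sq (norm_nonneg _)).symm
        _ ≤ Real.sqrt (4 / ((N:ℝ) + 1)) := Real.sqrt_le_sqrt hsq
    · have h0 : Tendsto (fun N : ℕ => 4 / ((N:ℝ) + 1)) atTop (nhds 0) := by
        have := tendsto_one_div_add_atTop_nhds_zero_nat.const_mul (4:ℝ)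
        simpa [div_eq_mul_inv, mul_comm] using this
      have h1 := (Real.continuous_sqrt.tendsto 0).comp h0
      rw [Real.sqrt_zero] at h1
      exact h1
  obtain ⟨xs, hxs⟩ := cauchySeq_tendsto_of_complete hcauchy
  -- g attains its infimum at xs
  have hgxs_le : g xs ≤ d := by
    have hbound : ∀ k : ℕ, g xs ≤ d + 1 / ((k:ℝ) + 1)
        + (2 * (M + ‖x k‖) + ‖xs - x k‖) * ‖xs - x k‖ := by
      intro k
      have := hcont xs (x k)
      have := (hx k).le
      linarith
    have hnorm : Tendsto (fun k => ‖xs - x k‖) atTop (nhds 0) := by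
      have := tendsto_iff_norm_sub_tendsto_zero.mp hxs
      simpa [norm_sub_rev] using this
    have hnx : Tendsto (fun k => ‖x k‖) atTop (nhds ‖xs‖) := hxs.norm
    have h1div : Tendsto (fun k : ℕ => 1 / ((k:ℝ) + 1)) atTop (nhds 0) :=
      tendsto_one_div_add_atTop_nhds_zero_nat
    have hR : Tendsto (fun k : ℕ => d + 1 / ((k:ℝ) + 1)
        + (2 * (M + ‖x k‖) + ‖xs - x k‖) * ‖xs - x k‖) atTop
        (nhds (d + 0 + (2 * (M + ‖xs‖) + 0) * 0)) := by
      exact (tendsto_const_nhds.add h1div).add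
        ((((hnx.const_add M).const_mul 2).add hnorm).mul hnorm)
    exact ge_of_tendsto (by simpa using hR) (Eventually.of_forall hbound)
  have hgxs : g xs = d := le_antisymm hgxs_le (hdle xs)
  -- conclude: Φ xs = xs
  refine ⟨xs, ?_⟩
  have h1 := key xs (Φ xs)
  have h2 : g (Φ xs) ≤ d := hgxs ▸ hdec xs
  have h3 := hdle ((2:ℝ)⁻¹ • (xs + Φ xs))
  have h4 : ‖xs - Φ xs‖ ^ 2 ≤ 0 := by linarith [hgxs]
  have h5 : ‖xs - Φ xs‖ = 0 := by nlinarith [norm_nonneg (xs - Φ xs)]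
  have h6 : xs - Φ xs = 0 := norm_eq_zero.mp h5
  have := sub_eq_zero.mp h6
  exact this.symm
end
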